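/- Let T be an infinite, locally finite rooted tree with root x₀, without leaves, and suppose T has an infinite independent path. Then there exists a strictly increasing sequence (n_i)_{i≥1} of positive integers such that F^{n_i}_T(x₀) is infinite for every i, if and only if T has infinitely many vertices of degree at least three. -/

import Mathlib

open SimpleGraph

/-- The `d`-ary tree: vertices are finite words over `Fin d`, the root is `[]`,
and each vertex `l` is adjacent to its `d` children `a :: l`. -/
def daryTree (d : ℕ) : SimpleGraph (List (Fin d)) where
  Adj x y := (∃ a, y = a :: x) ∨ (∃ a, x = a :: y)
  symm := by
    constructor
    intro x y h
    rcases h with ⟨a, ha⟩ | ⟨a, ha⟩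
    · exact Or.inr ⟨a, ha⟩
    · exact Or.inl ⟨a, ha⟩
  loopless := by
    constructor
    intro x h
    rcases h with ⟨a, ha⟩ | ⟨a, ha⟩ <;>
    · apply_fun List.length at ha
      simp at ha

/-- `C` is a contour of `G`: a finite set of edges whose deletion leaves exactly one
finite connected component, minimal with this property. -/
def IsContour {V : Type*} (G : SimpleGraph V) (C : Set (Sym2 V)) : Prop :=
  C.Finite ∧ C ⊆ G.edgeSet ∧
    (∃! K : (G.deleteEdges C).ConnectedComponent, K.supp.Finite) ∧
    ∀ e ∈ C, ∀ K : (G.deleteEdges (C \ {e})).ConnectedComponent, ¬ K.supp.Finite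

/-- `I` is the (unique) finite connected component `I_C` of `G \ C`. -/
def IsInterior {V : Type*} (G : SimpleGraph V) (C : Set (Sym2 V)) (I : Set V) : Prop :=
  I.Finite ∧ ∃ K : (G.deleteEdges C).ConnectedComponent, K.supp = I

/-- `F^n_G(x)`: the set of contours of `G` of size `n` whose finite component contains `x`. -/
def contours {V : Type*} (G : SimpleGraph V) (x : V) (n : ℕ) : Set (Set (Sym2 V)) :=
  {C | IsContour G C ∧ C.ncard = n ∧
    ((G.deleteEdges C).connectedComponentMk x).supp.Finite}

/-- Rooted contours: contours in `F^n_G(x)` containing an edge incident with `x`. -/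
def rootedContours {V : Type*} (G : SimpleGraph V) (x : V) (n : ℕ) : Set (Set (Sym2 V)) :=
  {C | C ∈ contours G x n ∧ ∃ e ∈ C, x ∈ e}

/-- `G` has an infinite independent path: a one-sided infinite path all of whose
vertices other than possibly the initial one have degree two in `G`. -/
def HasInfiniteIndependentPath {V : Type*} (G : SimpleGraph V) : Prop :=
  ∃ f : ℕ → V, Function.Injective f ∧ (∀ i, G.Adj (f i) (f (i + 1))) ∧
    ∀ i, 1 ≤ i → (G.neighborSet (f i)).ncard = 2

/-!
In a tree, the contours whose interior contains `x₀` are exactly the edge boundaries `∂I` of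
the finite connected sets `I ∋ x₀` (for the converse, every component of `G \ ∂I` other than
`I` must be infinite, which is where the absence of leaves enters). Counting the edges of the
subtree spanned by `I` gives `|∂I| = 2 + ∑_{v ∈ I} (deg v - 2)`. If only finitely many vertices
have degree at least three, this bounds the size of every contour. Otherwise, a connected set
`A` containing many branch vertices and the start of the independent ray has a large boundary,
and appending longer and longer initial segments of the ray to `A` gives infinitely many
contours of that same size.
-/

namespace SimpleGraph

variable {V : Type*} {G : SimpleGraph V}

def edgeBoundary (G : SimpleGraph V) (s : Set V) : Set (Sym2 V) :=
  {e | ∃ u ∈ s, ∃ v ∉ s, G.Adj u v ∧ s(u, v) = e}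

lemma mk_mem_edgeBoundary {s : Set V} {u v : V} :
    s(u, v) ∈ G.edgeBoundary s ↔
      G.Adj u v ∧ (u ∈ s ∧ v ∉ s ∨ v ∈ s ∧ u ∉ s) := by
  constructor
  · rintro ⟨a, ha, b, hb, hab, he⟩
    rcases Sym2.eq_iff.mp he with ⟨rfl, rfl⟩ | ⟨rfl, rfl⟩
    exacts [⟨hab, .inl ⟨ha, hb⟩⟩, ⟨hab.symm, .inr ⟨ha, hb⟩⟩]
  · rintro ⟨huv, ⟨hu, hv⟩ | ⟨hv, hu⟩⟩
    exacts [⟨u, hu, v, hv, huv, rfl⟩, ⟨v, hv, u, hu, huv.symm, Sym2.eq_swap⟩]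

lemma edgeBoundary_subset_edgeSet (s : Set V) : G.edgeBoundary s ⊆ G.edgeSet := by
  rintro _ ⟨u, -, v, -, huv, rfl⟩
  exact huv

lemma edgeBoundary_eq_biUnion (s : Set V) :
    G.edgeBoundary s = ⋃ u ∈ s, (fun v ↦ s(u, v)) '' (G.neighborSet u \ s) := by
  ext e
  simp only [edgeBoundary, Set.mem_ofPred_eq, Set.mem_iUnion, Set.mem_image, Set.mem_sdiff,
    mem_neighborSet]
  grind

lemma ncard_edgeBoundary (hloc : ∀ v, (G.neighborSet v).Finite) (I : Finset V) :
    (G.edgeBoundary I).ncard = ∑ u ∈ I, (G.neighborSet u \ I).ncard := by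
  have hdisj :
      (I : Set V).PairwiseDisjoint fun u ↦ (fun v ↦ s(u, v)) '' (G.neighborSet u \ I) := by
    rintro u hu u' hu' hne
    refine Set.disjoint_left.mpr ?_
    rintro _ ⟨v, hv, rfl⟩ ⟨v', hv', he⟩
    rcases Sym2.eq_iff.mp he with ⟨h, -⟩ | ⟨-, h⟩
    exacts [hne h.symm, hv'.2 (h ▸ hu)]
  rw [edgeBoundary_eq_biUnion, I.finite_toSet.ncard_biUnion
    (fun u _ ↦ ((hloc u).sdiff).image _) hdisj, ← finsum_mem_coe_finset]
  exact finsum_mem_congr rfl fun u _ ↦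
    Set.ncard_image_of_injective _ fun _ _ ↦ Sym2.congr_right.mp

lemma finite_edgeBoundary (hloc : ∀ v, (G.neighborSet v).Finite) (I : Finset V) :
    (G.edgeBoundary I).Finite := by
  rw [edgeBoundary_eq_biUnion]
  exact I.finite_toSet.biUnion fun u _ ↦ ((hloc u).sdiff).image _

lemma reachable_deleteEdges_of_preconnected_induce {s : Set V} {D : Set (Sym2 V)}
    (hs : (G.induce s).Preconnected) (hD : ∀ u ∈ s, ∀ v ∈ s, s(u, v) ∉ D) {u v : V}
    (hu : u ∈ s) (hv : v ∈ s) : (G.deleteEdges D).Reachable u v :=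
  (hs ⟨u, hu⟩ ⟨v, hv⟩).map
    { toFun := Subtype.val
      map_rel' := fun {a b} hab ↦ deleteEdges_adj.mpr ⟨hab, hD _ a.2 _ b.2⟩ }

lemma mk_notMem_edgeBoundary {s : Set V} {u v : V} (hu : u ∈ s) (hv : v ∈ s) :
    s(u, v) ∉ G.edgeBoundary s := by
  rw [mk_mem_edgeBoundary]
  tauto

lemma reachable_deleteEdges_edgeBoundary {s : Set V} (hs : (G.induce s).Preconnected) {u v : V}
    (hu : u ∈ s) (hv : v ∈ s) : (G.deleteEdges (G.edgeBoundary s)).Reachable u v :=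
  reachable_deleteEdges_of_preconnected_induce hs (fun _ ha _ hb ↦ mk_notMem_edgeBoundary ha hb)
    hu hv

lemma supp_subset_of_edgeBoundary_subset {s : Set V} {D : Set (Sym2 V)}
    (hsD : G.edgeBoundary s ⊆ D) {x : V} (hx : x ∈ s) :
    ((G.deleteEdges D).connectedComponentMk x).supp ⊆ s := by
  have walk_mem : ∀ {a b : V}, (G.deleteEdges D).Walk a b → a ∈ s → b ∈ s := by
    intro a b p
    induction p with
    | nil => exact id
    | cons h _ ih =>
      refine fun ha ↦ ih (by_contra fun hb ↦ (deleteEdges_adj.mp h).2 (hsD ?_))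
      exact mk_mem_edgeBoundary.mpr ⟨(deleteEdges_adj.mp h).1, .inl ⟨ha, hb⟩⟩
  intro y hy
  exact walk_mem (ConnectedComponent.exact hy).symm.some hx

lemma edgeBoundary_supp_subset (D : Set (Sym2 V)) (x : V) :
    G.edgeBoundary ((G.deleteEdges D).connectedComponentMk x).supp ⊆ D := by
  rintro _ ⟨u, hu, v, hv, huv, rfl⟩
  by_contra he
  refine hv ((ConnectedComponent.mem_supp_iff _ _).mpr ?_)
  rw [← (ConnectedComponent.mem_supp_iff _ _).mp hu]
  exact ConnectedComponent.sound (deleteEdges_adj.mpr ⟨huv, he⟩).reachable.symm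

lemma connected_induce_supp_deleteEdges (D : Set (Sym2 V)) (x : V) :
    (G.induce ((G.deleteEdges D).connectedComponentMk x).supp).Connected :=
  Connected.mono (G := (G.deleteEdges D).induce _) (fun _ _ h ↦ (deleteEdges_adj.mp h).1)
    (ConnectedComponent.maximal_connected_induce_supp _).prop

lemma supp_deleteEdges_edgeBoundary {s : Set V} (hs : (G.induce s).Preconnected) {x : V}
    (hx : x ∈ s) : ((G.deleteEdges (G.edgeBoundary s)).connectedComponentMk x).supp = s :=
  (supp_subset_of_edgeBoundary_subset subset_rfl hx).antisymm fun _ hy ↦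
    ConnectedComponent.sound (reachable_deleteEdges_edgeBoundary hs hy hx)

lemma IsAcyclic.eq_of_adj_of_adj (hG : G.IsAcyclic) {s t : Set V}
    (hs : (G.induce s).Preconnected) (ht : (G.induce t).Preconnected) (hst : Disjoint s t)
    {u u' v v' : V} (hu : u ∈ s) (hu' : u' ∈ s) (hv : v ∈ t) (hv' : v' ∈ t)
    (h : G.Adj u v) (h' : G.Adj u' v') : s(u, v) = s(u', v') := by
  by_contra hne
  have avoid : ∀ {r : Set V} {w : V}, w ∈ s(u, v) → w ∉ r →
      ∀ a ∈ r, ∀ b ∈ r, s(a, b) ∉ ({s(u, v)} : Set (Sym2 V)) := by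
    rintro r w hw hwr a ha b hb he
    rw [Set.mem_singleton_iff] at he
    rcases Sym2.mem_iff.mp (he ▸ hw) with rfl | rfl
    exacts [hwr ha, hwr hb]
  have hvs : v ∉ s := Set.disjoint_right.mp hst hv
  have hut : u ∉ t := Set.disjoint_left.mp hst hu
  refine isBridge_iff.mp (isAcyclic_iff_forall_adj_isBridge.mp hG h) ?_
  have hu'v' : (G.deleteEdges {s(u, v)}).Adj u' v' :=
    deleteEdges_adj.mpr ⟨h', fun he ↦ hne (Set.mem_singleton_iff.mp he).symm⟩
  have huu' := reachable_deleteEdges_of_preconnected_induce hs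
    (avoid (Sym2.mem_mk_right u v) hvs) hu hu'
  have hv'v := reachable_deleteEdges_of_preconnected_induce ht
    (avoid (Sym2.mem_mk_left u v) hut) hv' hv
  exact (huu'.trans hu'v'.reachable).trans hv'v

lemma IsAcyclic.ncard_edgeBoundary_add (hG : G.IsAcyclic) (hloc : ∀ v, (G.neighborSet v).Finite)
    {I : Finset V} (hI : (G.induce (I : Set V)).Connected) :
    (G.edgeBoundary I).ncard + 2 * I.card = ∑ v ∈ I, (G.neighborSet v).ncard + 2 := by
  classical
  have hedges := IsTree.card_edgeFinset ⟨hI, hG.induce _⟩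
  have hinner : ∑ v ∈ I, (G.neighborSet v ∩ I).ncard =
      2 * (G.induce (I : Set V)).edgeFinset.card := by
    rw [← sum_degrees_eq_twice_card_edges, ← Finset.sum_coe_sort I]
    refine Fintype.sum_congr _ _ fun v ↦ ?_
    rw [← card_neighborSet_eq_degree, ← Nat.card_eq_fintype_card, Nat.card_coe_set_eq,
      neighborSet_induce]
    exact (Set.ncard_subtype _ _).symm
  have hsplit : ∀ v ∈ I, (G.neighborSet v).ncard =
      (G.neighborSet v ∩ I).ncard + (G.neighborSet v \ I).ncard :=
    fun v _ ↦ (Set.ncard_inter_add_ncard_sdiff_eq_ncard _ _ (hloc v)).symm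
  rw [ncard_edgeBoundary hloc, Finset.sum_congr rfl hsplit, Finset.sum_add_distrib, hinner]
  simp only [Finset.coe_sort_coe, Fintype.card_coe] at hedges
  omega

lemma IsAcyclic.ncard_edgeBoundary_eq (hG : G.IsAcyclic) (hloc : ∀ v, (G.neighborSet v).Finite)
    {I : Finset V} (hdeg : ∀ v ∈ I, 2 ≤ (G.neighborSet v).ncard)
    (hI : (G.induce (I : Set V)).Connected) :
    (G.edgeBoundary I).ncard = 2 + ∑ v ∈ I, ((G.neighborSet v).ncard - 2) := by
  have hcount := hG.ncard_edgeBoundary_add hloc hI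
  have hsum : ∑ v ∈ I, ((G.neighborSet v).ncard - 2) + 2 * I.card =
      ∑ v ∈ I, (G.neighborSet v).ncard := by
    rw [mul_comm, ← smul_eq_mul, ← Finset.sum_const, ← Finset.sum_add_distrib]
    exact Finset.sum_congr rfl fun v hv ↦ Nat.sub_add_cancel (hdeg v hv)
  omega

lemma IsAcyclic.card_add_two_le_ncard_edgeBoundary (hG : G.IsAcyclic)
    (hloc : ∀ v, (G.neighborSet v).Finite) {I T : Finset V}
    (hdeg : ∀ v ∈ I, 2 ≤ (G.neighborSet v).ncard) (hI : (G.induce (I : Set V)).Connected)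
    (hTI : T ⊆ I) (hT : ∀ v ∈ T, 3 ≤ (G.neighborSet v).ncard) :
    T.card + 2 ≤ (G.edgeBoundary I).ncard := by
  rw [hG.ncard_edgeBoundary_eq hloc hdeg hI, add_comm]
  gcongr
  calc T.card = ∑ _v ∈ T, 1 := Finset.card_eq_sum_ones T
    _ ≤ ∑ v ∈ T, ((G.neighborSet v).ncard - 2) :=
      Finset.sum_le_sum fun v hv ↦ by have := hT v hv; omega
    _ ≤ ∑ v ∈ I, ((G.neighborSet v).ncard - 2) := Finset.sum_le_sum_of_subset hTI

lemma IsAcyclic.ncard_edgeBoundary_eq_of_subset (hG : G.IsAcyclic)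
    (hloc : ∀ v, (G.neighborSet v).Finite) {I J : Finset V}
    (hI : (G.induce (I : Set V)).Connected) (hJ : (G.induce (J : Set V)).Connected) (hIJ : I ⊆ J)
    (hdeg : ∀ v ∈ J, v ∉ I → (G.neighborSet v).ncard = 2) :
    (G.edgeBoundary J).ncard = (G.edgeBoundary I).ncard := by
  classical
  have hcountI := hG.ncard_edgeBoundary_add hloc hI
  have hcountJ := hG.ncard_edgeBoundary_add hloc hJ
  have hsum : ∑ v ∈ J, (G.neighborSet v).ncard =
      2 * (J \ I).card + ∑ v ∈ I, (G.neighborSet v).ncard := by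
    rw [← Finset.sum_sdiff hIJ, Finset.sum_congr rfl fun v hv ↦
      hdeg v (Finset.mem_sdiff.mp hv).1 (Finset.mem_sdiff.mp hv).2, Finset.sum_const,
      smul_eq_mul, mul_comm]
  have hcard := Finset.card_sdiff_add_card_eq_card hIJ
  omega

lemma Preconnected.two_le_ncard_neighborSet [Nontrivial V] (hG : G.Preconnected) {v : V}
    (hloc : (G.neighborSet v).Finite) (hleaf : (G.neighborSet v).ncard ≠ 1) :
    2 ≤ (G.neighborSet v).ncard := by
  obtain ⟨w, hw⟩ := hG.exists_adj_of_nontrivial v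
  have := (Set.ncard_pos hloc).mpr ⟨w, hw⟩
  omega

/-- A finite component `K` other than `I` would have at least two boundary edges, all of them
ending in `I`; two edges between the connected sets `K` and `I` close a cycle. -/
lemma IsAcyclic.infinite_supp_deleteEdges_edgeBoundary (hG : G.IsAcyclic)
    (hloc : ∀ v, (G.neighborSet v).Finite) (hdeg : ∀ v, 2 ≤ (G.neighborSet v).ncard)
    {I : Finset V} (hI : (G.induce (I : Set V)).Connected) {y : V} (hy : y ∉ I) :
    ((G.deleteEdges (G.edgeBoundary I)).connectedComponentMk y).supp.Infinite := by
  set K := ((G.deleteEdges (G.edgeBoundary I)).connectedComponentMk y).supp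
  intro hK
  have hKI : Disjoint K I := Set.disjoint_left.mpr fun z hzK hzI ↦ hy <| by
    rw [← Finset.mem_coe, ← supp_deleteEdges_edgeBoundary hI.preconnected hzI]
    exact ((ConnectedComponent.mem_supp_iff _ _).mp hzK).symm
  have hKconn : (G.induce K).Connected := connected_induce_supp_deleteEdges _ y
  have htwo : 2 ≤ (G.edgeBoundary K).ncard := by
    have hK' : (hK.toFinset : Set V) = K := hK.coe_toFinset
    have := hG.ncard_edgeBoundary_eq hloc (I := hK.toFinset) (fun v _ ↦ hdeg v) (by rwa [hK'])
    rw [hK'] at this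
    omega
  have toI :
      ∀ e ∈ G.edgeBoundary K, ∃ a ∈ K, ∃ b ∈ (I : Set V), G.Adj a b ∧ s(a, b) = e := by
    rintro _ ⟨a, ha, b, hb, hab, rfl⟩
    refine ⟨a, ha, b, ?_, hab, rfl⟩
    rcases (mk_mem_edgeBoundary.mp (edgeBoundary_supp_subset _ y ⟨a, ha, b, hb, hab, rfl⟩)).2
      with ⟨haI, -⟩ | ⟨hbI, -⟩
    exacts [absurd haI (Set.disjoint_left.mp hKI ha), hbI]
  obtain ⟨e, e', he, he', hne⟩ :=
    (Set.one_lt_ncard_iff (finite_edgeBoundary hloc hK.toFinset |>.subset (by simp))).mp htwo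
  obtain ⟨a, ha, b, hb, hab, rfl⟩ := toI e he
  obtain ⟨a', ha', b', hb', hab', rfl⟩ := toI e' he'
  exact hne (hG.eq_of_adj_of_adj hKconn.preconnected hI.preconnected hKI ha ha' hb hb' hab hab')

lemma IsAcyclic.isContour_edgeBoundary (hG : G.IsAcyclic) (hloc : ∀ v, (G.neighborSet v).Finite)
    (hdeg : ∀ v, 2 ≤ (G.neighborSet v).ncard) {I : Finset V}
    (hI : (G.induce (I : Set V)).Connected) : IsContour G (G.edgeBoundary I) := by
  obtain ⟨⟨x, hx⟩⟩ := hI.nonempty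
  have hsupp := supp_deleteEdges_edgeBoundary hI.preconnected hx
  refine ⟨finite_edgeBoundary hloc I, edgeBoundary_subset_edgeSet _,
    ⟨_, hsupp ▸ I.finite_toSet, fun K hK ↦ ?_⟩, fun e he K hK ↦ ?_⟩
  · obtain ⟨w, rfl⟩ := K.exists_rep
    by_cases hw : w ∈ I
    · exact (ConnectedComponent.mem_supp_iff _ _).mp (by rwa [hsupp])
    · exact absurd hK (hG.infinite_supp_deleteEdges_edgeBoundary hloc hdeg hI hw)
  · obtain ⟨w, rfl⟩ := K.exists_rep
    have hle : G.deleteEdges (G.edgeBoundary I) ≤ G.deleteEdges (G.edgeBoundary I \ {e}) :=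
      deleteEdges_anti Set.sdiff_subset
    obtain ⟨y, hy, hwy⟩ :
        ∃ y ∉ (I : Set V), (G.deleteEdges (G.edgeBoundary I \ {e})).Reachable w y := by
      by_cases hw : w ∈ I
      · obtain ⟨u, hu, v, hv, huv, rfl⟩ := he
        have huv' : (G.deleteEdges (G.edgeBoundary I \ {s(u, v)})).Adj u v :=
          deleteEdges_adj.mpr ⟨huv, fun h ↦ h.2 rfl⟩
        exact ⟨v, hv, ((reachable_deleteEdges_edgeBoundary hI.preconnected hw hu).mono hle).trans
          huv'.reachable⟩
      · exact ⟨w, hw, .rfl⟩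
    refine hG.infinite_supp_deleteEdges_edgeBoundary hloc hdeg hI hy (hK.subset fun z hz ↦ ?_)
    exact ConnectedComponent.sound
      (((ConnectedComponent.exact hz).mono hle).trans hwy.symm)

lemma IsAcyclic.edgeBoundary_mem_contours (hG : G.IsAcyclic)
    (hloc : ∀ v, (G.neighborSet v).Finite) (hdeg : ∀ v, 2 ≤ (G.neighborSet v).ncard)
    {I : Finset V} (hI : (G.induce (I : Set V)).Connected) {x : V} (hx : x ∈ I) :
    G.edgeBoundary I ∈ contours G x (G.edgeBoundary I).ncard := by
  refine ⟨hG.isContour_edgeBoundary hloc hdeg hI, rfl, ?_⟩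
  rw [supp_deleteEdges_edgeBoundary hI.preconnected hx]
  exact I.finite_toSet

lemma IsAcyclic.exists_eq_edgeBoundary_of_mem_contours (hG : G.IsAcyclic) {x : V} {n : ℕ}
    {C : Set (Sym2 V)} (hC : C ∈ contours G x n) :
    ∃ I : Finset V, (G.induce (I : Set V)).Connected ∧ C = G.edgeBoundary I := by
  obtain ⟨⟨-, hCE, -, hmin⟩, -, hfin⟩ := hC
  set I := ((G.deleteEdges C).connectedComponentMk x).supp
  refine ⟨hfin.toFinset, by rw [hfin.coe_toFinset]; exact connected_induce_supp_deleteEdges C x,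
    ?_⟩
  rw [hfin.coe_toFinset]
  refine Set.Subset.antisymm (fun e he ↦ ?_) (edgeBoundary_supp_subset C x)
  induction e using Sym2.ind with
  | _ u v =>
    have huv : G.Adj u v := hCE he
    refine mk_mem_edgeBoundary.mpr ⟨huv, ?_⟩
    by_cases hu : u ∈ I <;> by_cases hv : v ∈ I
    · exfalso
      refine isBridge_iff.mp (isAcyclic_iff_forall_adj_isBridge.mp hG huv) ?_
      have : (G.deleteEdges C).Reachable u v := ConnectedComponent.exact (hu.trans hv.symm)
      exact this.mono (deleteEdges_anti (Set.singleton_subset_iff.mpr he))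
    · exact .inl ⟨hu, hv⟩
    · exact .inr ⟨hv, hu⟩
    · -- `I` would remain a finite component after restoring `s(u, v)`
      exfalso
      refine hmin _ he ((G.deleteEdges (C \ {s(u, v)})).connectedComponentMk x) (hfin.subset ?_)
      refine supp_subset_of_edgeBoundary_subset (D := C \ {s(u, v)})
        (fun e' he' ↦ ⟨edgeBoundary_supp_subset C x he', fun h ↦ ?_⟩)
        ConnectedComponent.connectedComponentMk_mem
      rw [Set.mem_singleton_iff] at h
      subst h
      rw [mk_mem_edgeBoundary] at he'
      tauto

lemma IsAcyclic.le_sum_of_mem_contours (hG : G.IsAcyclic) (hloc : ∀ v, (G.neighborSet v).Finite)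
    (hdeg : ∀ v, 2 ≤ (G.neighborSet v).ncard) {S : Finset V}
    (hS : ∀ v, 3 ≤ (G.neighborSet v).ncard → v ∈ S) {x : V} {n : ℕ} {C : Set (Sym2 V)}
    (hC : C ∈ contours G x n) : n ≤ 2 + ∑ v ∈ S, ((G.neighborSet v).ncard - 2) := by
  obtain ⟨I, hI, rfl⟩ := hG.exists_eq_edgeBoundary_of_mem_contours hC
  rw [← hC.2.1, hG.ncard_edgeBoundary_eq hloc (fun v _ ↦ hdeg v) hI]
  exact Nat.add_le_add_left (Finset.sum_le_sum_of_ne_zero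
    (f := fun v ↦ (G.neighborSet v).ncard - 2) fun v _ hv ↦ hS v (by omega)) 2

/-- Appending initial segments of the ray to `A` only adds vertices of degree two, so it does not
change the size of the boundary. -/
lemma IsAcyclic.infinite_contours_of_ray (hG : G.IsAcyclic)
    (hloc : ∀ v, (G.neighborSet v).Finite) (hdeg : ∀ v, 2 ≤ (G.neighborSet v).ncard)
    {A : Finset V} (hA : (G.induce (A : Set V)).Connected) {x : V} (hx : x ∈ A) {f : ℕ → V}
    (hf : Function.Injective f) (hadj : ∀ i, G.Adj (f i) (f (i + 1))) (hf0 : f 0 ∈ A)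
    (hf2 : ∀ i, 1 ≤ i → (G.neighborSet (f i)).ncard = 2) :
    (contours G x (G.edgeBoundary A).ncard).Infinite := by
  classical
  let I : ℕ → Finset V := fun m ↦ A ∪ (Finset.range (m + 1)).image f
  have hAI : ∀ m, A ⊆ I m := fun m ↦ Finset.subset_union_left
  have hconn : ∀ m, (G.induce (I m : Set V)).Connected := by
    intro m
    induction m with
    | zero => rwa [show I 0 = A from Finset.union_eq_left.mpr (by simpa using hf0)]
    | succ m ih =>
      have hfm : f m ∈ I m := Finset.mem_union_right _ (Finset.mem_image_of_mem f (by simp))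
      have : I (m + 1) = insert (f (m + 1)) (I m) := by
        rw [← Finset.union_insert, ← Finset.image_insert, ← Finset.range_add_one]
      rw [this, Finset.coe_insert, Set.insert_eq]
      exact connected_induce_union (by simp) ih.preconnected (Set.mem_singleton _) hfm
        (hadj m).symm
  have hmem : ∀ m, G.edgeBoundary (I m) ∈ contours G x (G.edgeBoundary A).ncard := by
    intro m
    rw [← hG.ncard_edgeBoundary_eq_of_subset hloc hA (hconn m) (hAI m)]
    · exact hG.edgeBoundary_mem_contours hloc hdeg (hconn m) (hAI m hx)
    intro v hv hvA
    obtain ⟨j, -, rfl⟩ := Finset.mem_image.mp ((Finset.mem_union.mp hv).resolve_left hvA)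
    exact hf2 j (Nat.one_le_iff_ne_zero.mpr fun h ↦ hvA (h ▸ hf0))
  -- the sets `I m` exhaust the ray, so infinitely many of them are distinct
  have hI : (Set.range fun m ↦ (I m : Set V)).Infinite := fun hfin ↦
    Set.infinite_range_of_injective hf <| (hfin.sUnion (by simp)).subset fun _ ⟨j, hj⟩ ↦
      Set.mem_sUnion.mpr ⟨_, ⟨j, rfl⟩, hj ▸ Finset.mem_union_right _
        (Finset.mem_image_of_mem f (Finset.self_mem_range_succ j))⟩
  have hsupp : (fun C ↦ ((G.deleteEdges C).connectedComponentMk x).supp) ''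
      Set.range (fun m ↦ G.edgeBoundary (I m)) = Set.range fun m ↦ (I m : Set V) := by
    rw [← Set.range_comp]
    exact congrArg Set.range
      (funext fun m ↦ supp_deleteEdges_edgeBoundary (hconn m).preconnected (hAI m hx))
  exact (Set.Infinite.of_image _ (hsupp ▸ hI)).mono (Set.range_subset_iff.mpr hmem)

lemma IsAcyclic.exists_lt_infinite_contours (hG : G.IsAcyclic) (hconn : G.Preconnected)
    (hloc : ∀ v, (G.neighborSet v).Finite) (hdeg : ∀ v, 2 ≤ (G.neighborSet v).ncard)
    (hS : {v : V | 3 ≤ (G.neighborSet v).ncard}.Infinite) {f : ℕ → V}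
    (hf : Function.Injective f) (hadj : ∀ i, G.Adj (f i) (f (i + 1)))
    (hf2 : ∀ i, 1 ≤ i → (G.neighborSet (f i)).ncard = 2) (x : V) (b : ℕ) :
    ∃ s, b < s ∧ (contours G x s).Infinite := by
  classical
  obtain ⟨T, hTS, rfl⟩ := hS.exists_subset_card_eq b
  obtain ⟨A, hTA, hA⟩ :=
    extend_finset_to_connected hconn (Finset.insert_nonempty x (insert (f 0) T))
  have hsize := hG.card_add_two_le_ncard_edgeBoundary hloc (fun v _ ↦ hdeg v) hA
    (fun v hv ↦ hTA (by simp [hv])) (fun v hv ↦ hTS hv)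
  exact ⟨_, by omega,
    hG.infinite_contours_of_ray hloc hdeg hA (hTA (by simp)) hf hadj (hTA (by simp)) hf2⟩

end SimpleGraph

theorem exists_strictMono_infinite_contours_iff_general {V : Type*} (G : SimpleGraph V) (x₀ : V)
    (htree : G.IsTree) (hlocfin : ∀ v : V, (G.neighborSet v).Finite)
    (hnoleaf : ∀ v : V, (G.neighborSet v).ncard ≠ 1)
    (hpath : HasInfiniteIndependentPath G) :
    (∃ n : ℕ → ℕ, StrictMono n ∧ (∀ i, 1 ≤ n i) ∧ ∀ i, (contours G x₀ (n i)).Infinite) ↔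
      {v : V | 3 ≤ (G.neighborSet v).ncard}.Infinite := by
  classical
  obtain ⟨f, hf_inj, hf_adj, hf_deg⟩ := hpath
  have : Nontrivial V := hf_inj.nontrivial
  have hG := htree.isAcyclic
  have hdeg v : 2 ≤ (G.neighborSet v).ncard :=
    htree.connected.preconnected.two_le_ncard_neighborSet (hlocfin v) (hnoleaf v)
  constructor
  · rintro ⟨n, hn, -, hinf⟩ hS
    obtain ⟨S, hS⟩ := hS.exists_finset_coe
    set B := 2 + ∑ v ∈ S, ((G.neighborSet v).ncard - 2)
    obtain ⟨C, hC⟩ := (hinf (B + 1)).nonempty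
    have hle : n (B + 1) ≤ B :=
      hG.le_sum_of_mem_contours hlocfin hdeg (fun v hv ↦ by rwa [← Finset.mem_coe, hS]) hC
    have := hn.le_apply (x := B + 1)
    omega
  · intro hS
    have hP : {s | 1 ≤ s ∧ (contours G x₀ s).Infinite}.Infinite :=
      Set.infinite_of_forall_exists_gt fun b ↦
        have ⟨s, hbs, hs⟩ := hG.exists_lt_infinite_contours htree.connected.preconnected hlocfin
          hdeg hS hf_inj hf_adj hf_deg x₀ b
        ⟨s, ⟨by omega, hs⟩, hbs⟩
    exact ⟨Nat.nth _, Nat.nth_strictMono hP, fun i ↦ (Nat.nth_mem_of_infinite hP i).1,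
      fun i ↦ (Nat.nth_mem_of_infinite hP i).2⟩

/-- Let `T` be an infinite, locally finite rooted tree with root `x₀`,
without leaves, having an infinite independent path.  Then there is a strictly increasing
sequence `(n_i)` of positive integers with `F^{n_i}_T(x₀)` infinite for every `i` if and
only if `T` has infinitely many vertices of degree at least three. -/
theorem exists_strictMono_infinite_contours_iff {V : Type*} (G : SimpleGraph V) (x₀ : V)
    (htree : G.IsTree) (hlocfin : ∀ v : V, (G.neighborSet v).Finite) (hinf : Infinite V)
    (hnoleaf : ∀ v : V, (G.neighborSet v).ncard ≠ 1)
    (hpath : HasInfiniteIndependentPath G) :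
    (∃ n : ℕ → ℕ, StrictMono n ∧ (∀ i, 1 ≤ n i) ∧ ∀ i, (contours G x₀ (n i)).Infinite) ↔
      {v : V | 3 ≤ (G.neighborSet v).ncard}.Infinite :=
  exists_strictMono_infinite_contours_iff_general G x₀ htree hlocfin hnoleaf hpath
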